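/- arXiv:1009.0285 — 6 statements merged into one kernel-verified Lean document; each statement's English description precedes it below -/
import Mathlib

section
/- For positive integers m and k, each of the four component functions f(x,y) of the Lawson immersion Ψ_{m,k}, namely cos(mx)cos y, sin(mx)cos y, cos(kx)sin y and sin(kx)sin y, satisfies the eigenvalue equation −(1/p(y)²) ∂²f/∂x² − (1/p(y)) ∂/∂y ( p(y) ∂f/∂y ) = 2 f at every point (x,y) ∈ ℝ² with p(y) ≠ 0, where p(y) = √(k² + (m² − k²)cos²y). -/
open Real

/-!
Each component is a product `A(x) B(y)` with `A'' = -c² A` (`c = m` for the first two, `c = k`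
for the last two) and `B ∈ {cos, sin}`. Separating variables, `Δ(A B) = 2 A B` reduces to the
radial equation `p (p B')' = (c² - 2 p²) B`, which follows from `p² = k² + (m² - k²) cos² y` and
`p p' = -(m² - k²) sin y cos y`.
-/

/-- The Laplace–Beltrami operator `Δ` of the metric `p(y)² dx² + dy²`. -/
noncomputable def warpedLaplacian (p : ℝ → ℝ) (f : ℝ → ℝ → ℝ) (x y : ℝ) : ℝ :=
  -(1 / p y ^ 2) * deriv (deriv fun x' => f x' y) x
    - (1 / p y) * deriv (fun y' => p y' * deriv (fun y'' => f x y'') y') y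

theorem deriv_deriv_comp_mul_left {𝕜 E : Type*} [NontriviallyNormedField 𝕜] [NormedAddCommGroup E]
    [NormedSpace 𝕜 E] (c : 𝕜) (f : 𝕜 → E) (x : 𝕜) :
    deriv (deriv (f <| c * ·)) x = c ^ 2 • deriv (deriv f) (c * x) := by
  rw [funext (deriv_comp_mul_left c f), deriv_fun_const_smul_field, deriv_comp_mul_left,
    smul_smul, sq]

theorem deriv_deriv_cos_mul (c x : ℝ) :
    deriv (deriv fun t => cos (c * t)) x = -c ^ 2 * cos (c * x) := by
  rw [deriv_deriv_comp_mul_left c cos x, Real.deriv_cos', deriv.fun_neg, Real.deriv_sin,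
    smul_eq_mul]
  ring

theorem deriv_deriv_sin_mul (c x : ℝ) :
    deriv (deriv fun t => sin (c * t)) x = -c ^ 2 * sin (c * x) := by
  rw [deriv_deriv_comp_mul_left c sin x, Real.deriv_sin, Real.deriv_cos, smul_eq_mul]
  ring

theorem warpedLaplacian_mul (p A B : ℝ → ℝ) (x y : ℝ) :
    warpedLaplacian p (fun x y => A x * B y) x y =
      -(1 / p y ^ 2) * deriv (deriv A) x * B y
        - (1 / p y) * A x * deriv (fun y' => p y' * deriv B y') y := by
  have hB : (fun y' => p y' * deriv (fun y'' => A x * B y'') y') =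
      fun y' => A x * (p y' * deriv B y') := by
    funext y'
    rw [deriv_const_mul_field]
    ring
  rw [warpedLaplacian, deriv_mul_const_field', deriv_mul_const_field, hB, deriv_const_mul_field]
  ring

theorem warpedLaplacian_mul_eq_mul {p A B : ℝ → ℝ} {c μ x y : ℝ} (hp : p y ≠ 0)
    (hA : deriv (deriv A) x = -c ^ 2 * A x)
    (hB : p y * deriv (fun y' => p y' * deriv B y') y = (c ^ 2 - μ * p y ^ 2) * B y) :
    warpedLaplacian p (fun x y => A x * B y) x y = μ * (A x * B y) := by
  rw [warpedLaplacian_mul, hA]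
  field_simp
  linear_combination (-A x) * hB

noncomputable def lawsonDensity (m k y : ℝ) : ℝ :=
  √(k ^ 2 + (m ^ 2 - k ^ 2) * cos y ^ 2)

theorem sq_lawsonDensity (m k y : ℝ) :
    lawsonDensity m k y ^ 2 = k ^ 2 + (m ^ 2 - k ^ 2) * cos y ^ 2 := by
  refine sq_sqrt ?_
  nlinarith [sq_nonneg (k * sin y), sq_nonneg (m * cos y), sin_sq_add_cos_sq y]

section lawsonDensity

variable {m k y : ℝ}

theorem hasDerivAt_lawsonDensity (h : lawsonDensity m k y ≠ 0) :
    HasDerivAt (lawsonDensity m k)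
      (-((m ^ 2 - k ^ 2) * sin y * cos y) / lawsonDensity m k y) y := by
  have hq : HasDerivAt (fun t => k ^ 2 + (m ^ 2 - k ^ 2) * cos t ^ 2)
      ((m ^ 2 - k ^ 2) * (2 * cos y ^ 1 * -sin y)) y :=
    (((hasDerivAt_cos y).pow 2).const_mul _).const_add _
  have hq0 : k ^ 2 + (m ^ 2 - k ^ 2) * cos y ^ 2 ≠ 0 := by
    rw [← sq_lawsonDensity]; exact pow_ne_zero 2 h
  refine (hq.sqrt hq0).congr_deriv ?_
  change _ / (2 * lawsonDensity m k y) = _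
  field_simp

theorem lawsonDensity_mul_deriv_cos (h : lawsonDensity m k y ≠ 0) :
    lawsonDensity m k y * deriv (fun y' => lawsonDensity m k y' * deriv cos y') y
      = (m ^ 2 - 2 * lawsonDensity m k y ^ 2) * cos y := by
  simp only [Real.deriv_cos']
  rw [((hasDerivAt_lawsonDensity h).fun_mul (hasDerivAt_sin y).fun_neg).deriv]
  field_simp
  linear_combination (m ^ 2 - k ^ 2) * cos y * sin_sq_add_cos_sq y + cos y * sq_lawsonDensity m k y

theorem lawsonDensity_mul_deriv_sin (h : lawsonDensity m k y ≠ 0) :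
    lawsonDensity m k y * deriv (fun y' => lawsonDensity m k y' * deriv sin y') y
      = (k ^ 2 - 2 * lawsonDensity m k y ^ 2) * sin y := by
  rw [Real.deriv_sin, ((hasDerivAt_lawsonDensity h).fun_mul (hasDerivAt_cos y)).deriv]
  field_simp
  linear_combination sin y * sq_lawsonDensity m k y

end lawsonDensity

theorem lawson_components_eigenfunctions_general (m k : ℕ)
    (Ψ : ℝ → ℝ → Fin 4 → ℝ)
    (hΨ : ∀ x y : ℝ, Ψ x y =
      ![Real.cos (m * x) * Real.cos y, Real.sin (m * x) * Real.cos y,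
        Real.cos (k * x) * Real.sin y, Real.sin (k * x) * Real.sin y])
    (p : ℝ → ℝ)
    (hp : ∀ y : ℝ, p y = Real.sqrt ((k : ℝ) ^ 2 + ((m : ℝ) ^ 2 - (k : ℝ) ^ 2) * Real.cos y ^ 2)) :
    ∀ x y : ℝ, p y ≠ 0 → ∀ i : Fin 4,
      -(1 / (p y) ^ 2) * deriv (deriv (fun x' => Ψ x' y i)) x
        - (1 / p y) * deriv (fun y' => p y' * deriv (fun y'' => Ψ x y'' i) y') y
      = 2 * Ψ x y i := by
  intro x y hpy i
  obtain rfl : p = lawsonDensity m k := funext hp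
  obtain rfl : Ψ = fun x y => ![cos (m * x) * cos y, sin (m * x) * cos y,
      cos (k * x) * sin y, sin (k * x) * sin y] := funext fun x => funext (hΨ x)
  have hcos := lawsonDensity_mul_deriv_cos hpy
  have hsin := lawsonDensity_mul_deriv_sin hpy
  fin_cases i
  · exact warpedLaplacian_mul_eq_mul hpy (deriv_deriv_cos_mul _ x) hcos
  · exact warpedLaplacian_mul_eq_mul hpy (deriv_deriv_sin_mul _ x) hcos
  · exact warpedLaplacian_mul_eq_mul hpy (deriv_deriv_cos_mul _ x) hsin
  · exact warpedLaplacian_mul_eq_mul hpy (deriv_deriv_sin_mul _ x) hsin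

/-- Each component of the Lawson immersion `Ψ_{m,k}` is an eigenfunction of the
Laplace–Beltrami operator `Δf = −(1/p²) f_{xx} − (1/p)(p f_y)_y` of the induced metric,
with eigenvalue `2`, at every point where `p(y) ≠ 0`. -/
theorem lawson_components_eigenfunctions (m k : ℕ) (hm : 0 < m) (hk : 0 < k)
    (Ψ : ℝ → ℝ → Fin 4 → ℝ)
    (hΨ : ∀ x y : ℝ, Ψ x y =
      ![Real.cos (m * x) * Real.cos y, Real.sin (m * x) * Real.cos y,
        Real.cos (k * x) * Real.sin y, Real.sin (k * x) * Real.sin y])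
    (p : ℝ → ℝ)
    (hp : ∀ y : ℝ, p y = Real.sqrt ((k : ℝ) ^ 2 + ((m : ℝ) ^ 2 - (k : ℝ) ^ 2) * Real.cos y ^ 2)) :
    ∀ x y : ℝ, p y ≠ 0 → ∀ i : Fin 4,
      -(1 / (p y) ^ 2) * deriv (deriv (fun x' => Ψ x' y i)) x
        - (1 / p y) * deriv (fun y' => p y' * deriv (fun y'' => Ψ x y'' i) y') y
      = 2 * Ψ x y i :=
  lawson_components_eigenfunctions_general m k Ψ hΨ p hp
end

section
/- For positive integers m and k, the function φ(y) = cos y satisfies the Sturm–Liouville equation −(1/p(y)) (p(y) φ'(y))' + (l²/p(y)² − λ) φ(y) = 0 for all y ∈ ℝ, with parameter l = m and eigenvalue λ = 2, where p(y) = √(k² + (m² − k²)cos²y). -/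
open Real

/-
With `q = k² + (m² − k²) cos² y = k² sin² y + m² cos² y > 0` and `p = √q`, the chain rule gives
`p' = −(m² − k²) sin y cos y / p`. Expanding `(p · (−sin))' = −p' sin − p cos`, the left-hand side
becomes `cos y · (m² − (m² − k²) sin² y − q) / p²`, and the numerator vanishes by
`sin² + cos² = 1`.
-/

lemma add_sub_mul_cos_sq_pos {a b : ℝ} (ha : 0 < a) (hb : 0 < b) (y : ℝ) :
    0 < a + (b - a) * cos y ^ 2 :=
  calc 0 < min a b := lt_min ha hb
    _ = min a b * (sin y ^ 2 + cos y ^ 2) := by rw [sin_sq_add_cos_sq, mul_one]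
    _ ≤ a * sin y ^ 2 + b * cos y ^ 2 := by
      rw [mul_add]
      gcongr
      exacts [min_le_left a b, min_le_right a b]
    _ = a + (b - a) * cos y ^ 2 := by linear_combination a * sin_sq_add_cos_sq y

lemma hasDerivAt_sqrt_add_sub_mul_cos_sq {a b y : ℝ} (h : 0 < a + (b - a) * cos y ^ 2) :
    HasDerivAt (fun z => √(a + (b - a) * cos z ^ 2))
      (-(b - a) * sin y * cos y / √(a + (b - a) * cos y ^ 2)) y := by
  have hq : HasDerivAt (fun z => a + (b - a) * cos z ^ 2) (-(2 * (b - a) * sin y * cos y)) y :=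
    ((((hasDerivAt_cos y).fun_pow 2).const_mul (b - a)).const_add a).congr_deriv
      (by norm_num; ring)
  convert hq.sqrt h.ne' using 1
  ring

/-- The function `φ(y) = cos y` satisfies the Sturm–Liouville equation
`−(1/p)(p φ')' + (l²/p² − λ)φ = 0` with `l = m` and `λ = 2`, where
`p(y) = √(k² + (m² − k²)cos²y)`. -/
theorem cos_solves_sturm_liouville (m k : ℕ) (hm : 0 < m) (hk : 0 < k)
    (p : ℝ → ℝ)
    (hp : ∀ y : ℝ, p y = Real.sqrt ((k : ℝ) ^ 2 + ((m : ℝ) ^ 2 - (k : ℝ) ^ 2) * Real.cos y ^ 2)) :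
    ∀ y : ℝ,
      -(1 / p y) * deriv (fun y' => p y' * deriv Real.cos y') y
        + ((m : ℝ) ^ 2 / (p y) ^ 2 - 2) * Real.cos y = 0 := by
  obtain rfl : p = fun y => √((k : ℝ) ^ 2 + ((m : ℝ) ^ 2 - (k : ℝ) ^ 2) * cos y ^ 2) := funext hp
  intro y
  have hq_pos := add_sub_mul_cos_sq_pos (pow_pos (Nat.cast_pos.mpr hk) 2)
    (pow_pos (Nat.cast_pos.mpr hm) 2) y
  have hderiv := ((hasDerivAt_sqrt_add_sub_mul_cos_sq hq_pos).fun_mul (hasDerivAt_sin y).fun_neg).deriv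
  rw [deriv_cos', hderiv]
  have hsq := sq_sqrt hq_pos.le
  have hp_pos := sqrt_pos.mpr hq_pos
  field_simp
  linear_combination (-cos y) * hsq - cos y * ((m : ℝ) ^ 2 - (k : ℝ) ^ 2) * sin_sq_add_cos_sq y
end

section
/- For positive integers m and k, the function φ(y) = sin y satisfies the Sturm–Liouville equation −(1/p(y)) (p(y) φ'(y))' + (l²/p(y)² − λ) φ(y) = 0 for all y ∈ ℝ, with parameter l = k and eigenvalue λ = 2, where p(y) = √(k² + (m² − k²)cos²y). -/
open Real

/-! For `p = √q` with `q = b + c cos² y > 0`, one has `p p' = -c sin cos`, hence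
`(p cos)' = -sin · (q + c cos²) / p = -sin · (2q - b) / p` and `-(1/p)(p cos)' = (2 - b/p²) sin`.
So `sin` solves the equation with `l² = b`, `λ = 2` for any such weight; the Lawson weight
`q = k² + (m² - k²) cos² = k² sin² + m² cos²` is positive. -/

lemma sq_add_sub_sq_mul_cos_sq_pos {a b : ℝ} (ha : a ≠ 0) (hb : b ≠ 0) (y : ℝ) :
    0 < b ^ 2 + (a ^ 2 - b ^ 2) * cos y ^ 2 := by
  have hsum : b ^ 2 + (a ^ 2 - b ^ 2) * cos y ^ 2 = b ^ 2 * sin y ^ 2 + a ^ 2 * cos y ^ 2 := by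
    linear_combination b ^ 2 * (sin_sq_add_cos_sq y).symm
  rw [hsum]
  rcases eq_or_ne (cos y) 0 with hcos | hcos
  · have hsin : sin y ≠ 0 := by
      intro hsin
      simpa [hsin, hcos] using sin_sq_add_cos_sq y
    positivity
  · positivity

lemma hasDerivAt_sqrt_add_mul_cos_sq_mul_cos {b c y : ℝ} (hq : 0 < b + c * cos y ^ 2) :
    HasDerivAt (fun y' => √(b + c * cos y' ^ 2) * cos y')
      (-sin y * (b + 2 * c * cos y ^ 2) / √(b + c * cos y ^ 2)) y := by
  have hq' : HasDerivAt (fun y' => b + c * cos y' ^ 2) (c * (2 * cos y * -sin y)) y := by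
    simpa using (((hasDerivAt_cos y).pow 2).const_mul c).const_add b
  refine ((hq'.sqrt hq.ne').mul (hasDerivAt_cos y)).congr_deriv ?_
  have hsqrt : √(b + c * cos y ^ 2) ≠ 0 := (sqrt_pos.mpr hq).ne'
  field_simp
  rw [sq_sqrt hq.le]
  ring

lemma sin_solves_sturmLiouville_sqrt_add_mul_cos_sq {b c y : ℝ} (hq : 0 < b + c * cos y ^ 2) :
    -(1 / √(b + c * cos y ^ 2)) * deriv (fun y' => √(b + c * cos y' ^ 2) * cos y') y
      + (b / √(b + c * cos y ^ 2) ^ 2 - 2) * sin y = 0 := by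
  rw [(hasDerivAt_sqrt_add_mul_cos_sq_mul_cos hq).deriv]
  have hsqrt : √(b + c * cos y ^ 2) ≠ 0 := (sqrt_pos.mpr hq).ne'
  field_simp
  rw [sq_sqrt hq.le]
  ring

/-- The function `φ(y) = sin y` satisfies the Sturm–Liouville equation
`−(1/p)(p φ')' + (l²/p² − λ)φ = 0` with `l = k` and `λ = 2`, where
`p(y) = √(k² + (m² − k²)cos²y)`. -/
theorem sin_solves_sturm_liouville (m k : ℕ) (hm : 0 < m) (hk : 0 < k)
    (p : ℝ → ℝ)
    (hp : ∀ y : ℝ, p y = Real.sqrt ((k : ℝ) ^ 2 + ((m : ℝ) ^ 2 - (k : ℝ) ^ 2) * Real.cos y ^ 2)) :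
    ∀ y : ℝ,
      -(1 / p y) * deriv (fun y' => p y' * deriv Real.sin y') y
        + ((k : ℝ) ^ 2 / (p y) ^ 2 - 2) * Real.sin y = 0 := by
  intro y
  obtain rfl : p = fun y => √((k : ℝ) ^ 2 + ((m : ℝ) ^ 2 - (k : ℝ) ^ 2) * cos y ^ 2) := funext hp
  simp only [Real.deriv_sin]
  exact sin_solves_sturmLiouville_sqrt_add_mul_cos_sq
    (sq_add_sub_sq_mul_cos_sq_pos (Nat.cast_ne_zero.mpr hm.ne') (Nat.cast_ne_zero.mpr hk.ne') y)
end

section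
/- Let m and k be positive integers with m ≠ k, and let p(y) = √(k² + (m² − k²)cos²y). Then every twice continuously differentiable 2π-periodic function φ : ℝ → ℝ satisfying −(1/p(y))(p(y)φ'(y))' + (m²/p(y)² − 2)φ(y) = 0 for all y is a constant multiple of cos y; that is, the eigenvalue λ = 2 of the periodic Sturm–Liouville problem with l = m has multiplicity one. -/
/-!
Write `W(u, v) = u v' - u' v` and `a = m² - k²`. Since `p² = k² + a cos²`, the equation reads
`p² (φ'' + φ) = a sin · W(cos, φ)`. As `cos` is itself a solution, Abel's identity makes
`p W(cos, φ)` constant, say `w`, and then `W(sin, φ)' = sin (φ'' + φ) = a w sin² / p³`.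
Integrating over a period, `W(sin, φ)(2π) = W(sin, φ)(0)` forces `w = 0`, because `a ≠ 0` and
`∫ sin² / p³ > 0`. So `W(cos, φ) = 0` and `W(sin, φ)` is constant, equal to `-φ(0)`, and
`φ = sin · W(cos, φ) - cos · W(sin, φ) = φ(0) cos`.
-/

open Real

noncomputable def lawsonProfile (m k y : ℝ) : ℝ := √(k ^ 2 + (m ^ 2 - k ^ 2) * cos y ^ 2)

section LawsonProfile

variable {m k : ℝ}

theorem sq_add_sub_mul_cos_sq_pos (hm : m ≠ 0) (hk : k ≠ 0) (y : ℝ) :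
    0 < k ^ 2 + (m ^ 2 - k ^ 2) * cos y ^ 2 := by
  have hsc := sin_sq_add_cos_sq y
  rw [show k ^ 2 + (m ^ 2 - k ^ 2) * cos y ^ 2 = k ^ 2 * sin y ^ 2 + m ^ 2 * cos y ^ 2 by
    linear_combination -k ^ 2 * hsc]
  rcases eq_or_ne (cos y) 0 with hcos | hcos
  · have hsin : sin y ^ 2 = 1 := by simpa [hcos] using hsc
    simp only [hcos, hsin]
    positivity
  · positivity

theorem lawsonProfile_pos (hm : m ≠ 0) (hk : k ≠ 0) (y : ℝ) : 0 < lawsonProfile m k y :=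
  sqrt_pos.2 (sq_add_sub_mul_cos_sq_pos hm hk y)

theorem lawsonProfile_sq (hm : m ≠ 0) (hk : k ≠ 0) (y : ℝ) :
    lawsonProfile m k y ^ 2 = k ^ 2 + (m ^ 2 - k ^ 2) * cos y ^ 2 :=
  sq_sqrt (sq_add_sub_mul_cos_sq_pos hm hk y).le

theorem hasDerivAt_lawsonProfile (hm : m ≠ 0) (hk : k ≠ 0) (y : ℝ) :
    HasDerivAt (lawsonProfile m k)
      (-((m ^ 2 - k ^ 2) * cos y * sin y) / lawsonProfile m k y) y := by
  refine ((((hasDerivAt_cos y).fun_pow 2).const_mul _).const_add _).sqrt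
    (sq_add_sub_mul_cos_sq_pos hm hk y).ne' |>.congr_deriv ?_
  have hp := (lawsonProfile_pos hm hk y).ne'
  unfold lawsonProfile at hp ⊢
  field_simp
  ring

theorem continuous_lawsonProfile : Continuous (lawsonProfile m k) := by
  unfold lawsonProfile
  fun_prop

end LawsonProfile

noncomputable def wronskian (u v : ℝ → ℝ) (y : ℝ) : ℝ := u y * deriv v y - deriv u y * v y

section Wronskian

variable {u v φ : ℝ → ℝ} {y : ℝ}

theorem hasDerivAt_wronskian (hu : DifferentiableAt ℝ u y) (hu' : DifferentiableAt ℝ (deriv u) y)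
    (hv : DifferentiableAt ℝ v y) (hv' : DifferentiableAt ℝ (deriv v) y) :
    HasDerivAt (wronskian u v) (u y * deriv (deriv v) y - deriv (deriv u) y * v y) y := by
  refine (hu.hasDerivAt.mul hv'.hasDerivAt).sub (hu'.hasDerivAt.mul hv.hasDerivAt)
    |>.congr_deriv ?_
  ring

theorem wronskian_cos : wronskian cos φ y = cos y * deriv φ y + sin y * φ y := by
  simp [wronskian]

theorem wronskian_sin : wronskian sin φ y = sin y * deriv φ y - cos y * φ y := by
  simp [wronskian]

theorem hasDerivAt_wronskian_cos (hφ : DifferentiableAt ℝ φ y)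
    (hφ' : DifferentiableAt ℝ (deriv φ) y) :
    HasDerivAt (wronskian cos φ) (cos y * (deriv (deriv φ) y + φ y)) y := by
  refine hasDerivAt_wronskian (by fun_prop) (by simp) hφ hφ' |>.congr_deriv ?_
  simp only [deriv_cos', deriv.fun_neg', Real.deriv_sin, neg_mul, sub_neg_eq_add]
  ring

theorem hasDerivAt_wronskian_sin (hφ : DifferentiableAt ℝ φ y)
    (hφ' : DifferentiableAt ℝ (deriv φ) y) :
    HasDerivAt (wronskian sin φ) (sin y * (deriv (deriv φ) y + φ y)) y := by
  refine hasDerivAt_wronskian (by fun_prop) (by simp) hφ hφ' |>.congr_deriv ?_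
  simp only [Real.deriv_sin, deriv_cos', neg_mul, sub_neg_eq_add]
  ring

theorem sin_mul_wronskian_cos_sub_cos_mul_wronskian_sin :
    sin y * wronskian cos φ y - cos y * wronskian sin φ y = φ y := by
  rw [wronskian_cos, wronskian_sin]
  linear_combination φ y * sin_sq_add_cos_sq y

end Wronskian

theorem eq_zero_of_forall_hasDerivAt_mul_of_integral_pos {f g : ℝ → ℝ} {a b c : ℝ}
    (hpos : 0 < ∫ x in a..b, g x)
    (hf : ∀ x ∈ Set.uIcc a b, HasDerivAt f (c * g x) x) (hfab : f b = f a) : c = 0 := by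
  have hg := intervalIntegral.intervalIntegrable_of_integral_ne_zero hpos.ne'
  have h := intervalIntegral.integral_eq_sub_of_hasDerivAt hf (hg.const_mul c)
  rw [intervalIntegral.integral_const_mul, hfab, sub_self] at h
  exact (mul_eq_zero.1 h).resolve_right hpos.ne'

section LawsonEquation

variable {m k : ℝ} {φ : ℝ → ℝ} {y : ℝ}

theorem integral_sin_sq_div_lawsonProfile_pow_pos (hm : m ≠ 0) (hk : k ≠ 0) :
    0 < ∫ y in 0..2 * π, sin y ^ 2 / lawsonProfile m k y ^ 3 := by
  have hp := lawsonProfile_pos hm hk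
  refine intervalIntegral.integral_pos (by positivity) ?_
    (fun y _ => div_nonneg (sq_nonneg _) (pow_pos (hp y) 3).le)
    ⟨π / 2, ⟨by positivity, by linarith [pi_pos]⟩, by simp [hp]⟩
  exact (continuous_sin.pow 2).div (continuous_lawsonProfile.pow 3)
    (fun y => (pow_pos (hp y) 3).ne') |>.continuousOn

theorem lawsonProfile_sq_mul_deriv_deriv_add_self (hm : m ≠ 0) (hk : k ≠ 0)
    (hφ' : DifferentiableAt ℝ (deriv φ) y)
    (heq : -(1 / lawsonProfile m k y) * deriv (fun y' => lawsonProfile m k y' * deriv φ y') y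
        + (m ^ 2 / lawsonProfile m k y ^ 2 - 2) * φ y = 0) :
    lawsonProfile m k y ^ 2 * (deriv (deriv φ) y + φ y)
      = (m ^ 2 - k ^ 2) * sin y * wronskian cos φ y := by
  rw [((hasDerivAt_lawsonProfile hm hk y).fun_mul hφ'.hasDerivAt).deriv] at heq
  have hp := (lawsonProfile_pos hm hk y).ne'
  have hsq := lawsonProfile_sq hm hk y
  field_simp at heq
  rw [wronskian_cos]
  linear_combination -heq - φ y * hsq - (m ^ 2 - k ^ 2) * φ y * sin_sq_add_cos_sq y

theorem hasDerivAt_lawsonProfile_mul_wronskian_cos (hm : m ≠ 0) (hk : k ≠ 0)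
    (hφ : DifferentiableAt ℝ φ y) (hφ' : DifferentiableAt ℝ (deriv φ) y)
    (hode : lawsonProfile m k y ^ 2 * (deriv (deriv φ) y + φ y)
      = (m ^ 2 - k ^ 2) * sin y * wronskian cos φ y) :
    HasDerivAt (fun y => lawsonProfile m k y * wronskian cos φ y) 0 y := by
  refine (hasDerivAt_lawsonProfile hm hk y).fun_mul (hasDerivAt_wronskian_cos hφ hφ')
    |>.congr_deriv ?_
  have hp := (lawsonProfile_pos hm hk y).ne'
  field_simp
  linear_combination cos y * hode

theorem hasDerivAt_wronskian_sin_of_lawsonProfile_mul_wronskian_cos_eq (hm : m ≠ 0) (hk : k ≠ 0)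
    (hφ : DifferentiableAt ℝ φ y) (hφ' : DifferentiableAt ℝ (deriv φ) y)
    (hode : lawsonProfile m k y ^ 2 * (deriv (deriv φ) y + φ y)
      = (m ^ 2 - k ^ 2) * sin y * wronskian cos φ y) {w : ℝ}
    (hw : lawsonProfile m k y * wronskian cos φ y = w) :
    HasDerivAt (wronskian sin φ)
      ((m ^ 2 - k ^ 2) * w * (sin y ^ 2 / lawsonProfile m k y ^ 3)) y := by
  refine hasDerivAt_wronskian_sin hφ hφ' |>.congr_deriv ?_
  have hp := (lawsonProfile_pos hm hk y).ne'
  subst hw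
  field_simp
  linear_combination sin y * hode

end LawsonEquation

/-- For `m ≠ k`, the eigenvalue `λ = 2` of the periodic Sturm–Liouville problem with `l = m`
has multiplicity one: every `C²` `2π`-periodic solution is a constant multiple of `cos y`. -/
theorem multiplicity_one_cos (m k : ℕ) (hm : 0 < m) (hk : 0 < k) (hmk : m ≠ k)
    (p : ℝ → ℝ)
    (hp : ∀ y : ℝ, p y = Real.sqrt ((k : ℝ) ^ 2 + ((m : ℝ) ^ 2 - (k : ℝ) ^ 2) * Real.cos y ^ 2))
    (φ : ℝ → ℝ) (hφ : ContDiff ℝ 2 φ)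
    (hper : ∀ y : ℝ, φ (y + 2 * π) = φ y)
    (heq : ∀ y : ℝ,
      -(1 / p y) * deriv (fun y' => p y' * deriv φ y') y
        + ((m : ℝ) ^ 2 / (p y) ^ 2 - 2) * φ y = 0) :
    ∃ c : ℝ, ∀ y : ℝ, φ y = c * Real.cos y := by
  have hm' : (m : ℝ) ≠ 0 := by positivity
  have hk' : (k : ℝ) ≠ 0 := by positivity
  have ha : (m : ℝ) ^ 2 - k ^ 2 ≠ 0 := by
    rw [sub_ne_zero]
    exact_mod_cast (Nat.pow_left_injective two_ne_zero).ne hmk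
  obtain rfl : p = lawsonProfile m k := funext hp
  have hφ₁ : Differentiable ℝ φ := hφ.differentiable two_ne_zero
  have hφ₂ : Differentiable ℝ (deriv φ) := hφ.differentiable_deriv_two
  have hode y := lawsonProfile_sq_mul_deriv_deriv_add_self hm' hk' (hφ₂ y) (heq y)
  set W := fun y => lawsonProfile m k y * wronskian cos φ y
  have hW' y := hasDerivAt_lawsonProfile_mul_wronskian_cos hm' hk' (hφ₁ y) (hφ₂ y) (hode y)
  have hW y : W y = W 0 :=
    is_const_of_deriv_eq_zero (fun x => (hW' x).differentiableAt) (fun x => (hW' x).deriv) y 0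
  have hR' y := hasDerivAt_wronskian_sin_of_lawsonProfile_mul_wronskian_cos_eq hm' hk'
    (hφ₁ y) (hφ₂ y) (hode y) (hW y)
  have hW0 : W 0 = 0 := by
    refine (mul_eq_zero.1 <| eq_zero_of_forall_hasDerivAt_mul_of_integral_pos
      (integral_sin_sq_div_lawsonProfile_pow_pos hm' hk') (fun y _ => hR' y) ?_).resolve_left ha
    simpa [wronskian_sin] using hper 0
  have hR y : wronskian sin φ y = wronskian sin φ 0 :=
    is_const_of_deriv_eq_zero (fun x => (hR' x).differentiableAt)
      (fun x => by simp [(hR' x).deriv, hW0]) y 0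
  refine ⟨φ 0, fun y => ?_⟩
  have hWy : wronskian cos φ y = 0 :=
    (mul_eq_zero.1 ((hW y).trans hW0)).resolve_left (lawsonProfile_pos hm' hk' y).ne'
  rw [← sin_mul_wronskian_cos_sub_cos_mul_wronskian_sin (φ := φ), hWy, hR, wronskian_sin]
  simp [mul_comm]
end

section
/- Let m and k be positive integers with m ≠ k, and define F : (−π/2, π/2) → ℝ by F(y) = cos y · ∫₀^y dξ / (cos²ξ · √(k² + (m² − k²)cos²ξ)). Then the derivative F'(y) tends, as y tends to π/2 from the left, to a finite nonzero limit Z. -/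
/-!
With `p ξ = √(a + b cos² ξ)`, the function `sin ξ · p ξ / (a cos ξ)` is an antiderivative of
`1 / (cos² ξ · p ξ) + (b / a) · cos² ξ / p ξ`. Hence on `(-π/2, π/2)`
`F y = sin y · p y / a - (b / a) · cos y · ∫₀^y cos² ξ / p ξ dξ`,
and the right-hand side is smooth across `π/2`. Its derivative there is
`(b / a) ∫₀^{π/2} cos² ξ / p ξ dξ`, which for `a = k²`, `b = m² - k²` is nonzero since `m ≠ k`.
-/

open Real Filter Set Topology MeasureTheory intervalIntegral

noncomputable section

namespace CosWeight

variable {a b : ℝ}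

def weight (a b y : ℝ) : ℝ := √(a + b * cos y ^ 2)

def cosSqIntegral (a b y : ℝ) : ℝ := ∫ ξ in (0 : ℝ)..y, cos ξ ^ 2 / weight a b ξ

def closedForm (a b y : ℝ) : ℝ := sin y * weight a b y / a - b / a * (cos y * cosSqIntegral a b y)

lemma add_mul_cos_sq_pos (ha : 0 < a) (hab : 0 < a + b) (y : ℝ) : 0 < a + b * cos y ^ 2 := by
  rcases le_total 0 b with hb | hb
  · nlinarith [mul_nonneg hb (sq_nonneg (cos y))]
  · nlinarith [mul_le_mul_of_nonpos_left (cos_sq_le_one y) hb]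

lemma pos_of_forall_add_mul_cos_sq_pos (hq : ∀ y, 0 < a + b * cos y ^ 2) : 0 < a := by
  simpa using hq (π / 2)

lemma weight_pos (hq : ∀ y, 0 < a + b * cos y ^ 2) (y : ℝ) : 0 < weight a b y :=
  sqrt_pos.2 (hq y)

lemma weight_sq (hq : ∀ y, 0 < a + b * cos y ^ 2) (y : ℝ) :
    weight a b y ^ 2 = a + b * cos y ^ 2 :=
  sq_sqrt (hq y).le

@[fun_prop]
lemma continuous_weight : Continuous (weight a b) := by
  unfold weight; fun_prop

lemma hasDerivAt_weight (hq : ∀ y, 0 < a + b * cos y ^ 2) (y : ℝ) :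
    HasDerivAt (weight a b) (-(b * sin y * cos y) / weight a b y) y := by
  have hq' : HasDerivAt (fun y => a + b * cos y ^ 2) (b * (2 * cos y ^ 1 * -sin y)) y :=
    (((hasDerivAt_cos y).pow 2).const_mul b).const_add a
  refine (hq'.sqrt (hq y).ne').congr_deriv ?_
  have := (weight_pos hq y).ne'
  simp only [weight] at this ⊢
  field_simp

lemma continuous_cosSq_div_weight (hq : ∀ y, 0 < a + b * cos y ^ 2) :
    Continuous fun ξ => cos ξ ^ 2 / weight a b ξ :=
  (continuous_cos.pow 2).div continuous_weight fun y => (weight_pos hq y).ne'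

lemma hasDerivAt_cosSqIntegral (hq : ∀ y, 0 < a + b * cos y ^ 2) (y : ℝ) :
    HasDerivAt (cosSqIntegral a b) (cos y ^ 2 / weight a b y) y :=
  have hc := continuous_cosSq_div_weight hq
  integral_hasDerivAt_right (hc.intervalIntegrable _ _) (hc.stronglyMeasurableAtFilter _ _)
    hc.continuousAt

lemma continuous_cosSqIntegral (hq : ∀ y, 0 < a + b * cos y ^ 2) :
    Continuous (cosSqIntegral a b) :=
  continuous_iff_continuousAt.2 fun y => (hasDerivAt_cosSqIntegral hq y).continuousAt

lemma cosSqIntegral_pi_div_two_pos (hq : ∀ y, 0 < a + b * cos y ^ 2) :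
    0 < cosSqIntegral a b (π / 2) := by
  refine intervalIntegral_pos_of_pos_on ((continuous_cosSq_div_weight hq).intervalIntegrable _ _)
    (fun x hx => ?_) (by linarith [pi_pos])
  have := cos_pos_of_mem_Ioo ⟨by linarith [hx.1, pi_pos], hx.2⟩
  have := weight_pos hq x
  positivity

lemma hasDerivAt_sin_mul_weight_div_cos (hq : ∀ y, 0 < a + b * cos y ^ 2) {ξ : ℝ}
    (hξ : cos ξ ≠ 0) :
    HasDerivAt (fun ξ => sin ξ * weight a b ξ / (a * cos ξ))
      (1 / (cos ξ ^ 2 * weight a b ξ) + b / a * (cos ξ ^ 2 / weight a b ξ)) ξ := by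
  have ha := (pos_of_forall_add_mul_cos_sq_pos hq).ne'
  have hp := (weight_pos hq ξ).ne'
  refine (((hasDerivAt_sin ξ).mul (hasDerivAt_weight hq ξ)).div
    ((hasDerivAt_cos ξ).const_mul a) (mul_ne_zero ha hξ)).congr_deriv ?_
  simp only [Pi.mul_apply]
  field_simp
  linear_combination weight_sq hq ξ + (weight a b ξ ^ 2 - b * cos ξ ^ 2) * sin_sq_add_cos_sq ξ

lemma cos_mul_integral_eq_closedForm (hq : ∀ y, 0 < a + b * cos y ^ 2) {y : ℝ}
    (hy : y ∈ Ioo (-(π / 2)) (π / 2)) :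
    cos y * ∫ ξ in (0 : ℝ)..y, 1 / (cos ξ ^ 2 * weight a b ξ) = closedForm a b y := by
  have hsub : uIcc 0 y ⊆ Ioo (-(π / 2)) (π / 2) :=
    ordConnected_Ioo.uIcc_subset ⟨by linarith [pi_pos], by linarith [pi_pos]⟩ hy
  have hcos {ξ : ℝ} (hξ : ξ ∈ uIcc 0 y) : 0 < cos ξ := cos_pos_of_mem_Ioo (hsub hξ)
  have hint : IntervalIntegrable (fun ξ => 1 / (cos ξ ^ 2 * weight a b ξ)) volume 0 y :=
    ContinuousOn.intervalIntegrable <| continuousOn_const.div (by fun_prop) fun ξ hξ =>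
      (mul_pos (pow_pos (hcos hξ) 2) (weight_pos hq ξ)).ne'
  have hcint : IntervalIntegrable (fun ξ => b / a * (cos ξ ^ 2 / weight a b ξ)) volume 0 y :=
    (continuous_const.mul (continuous_cosSq_div_weight hq)).intervalIntegrable _ _
  have hFTC := integral_eq_sub_of_hasDerivAt
    (fun ξ hξ => hasDerivAt_sin_mul_weight_div_cos hq (hcos hξ).ne') (hint.add hcint)
  rw [integral_add hint hcint, intervalIntegral.integral_const_mul] at hFTC
  have ha := (pos_of_forall_add_mul_cos_sq_pos hq).ne'
  have := (hcos (right_mem_uIcc (a := 0))).ne'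
  simp only [sin_zero, zero_mul, zero_div, sub_zero] at hFTC
  rw [eq_sub_of_add_eq hFTC, closedForm, cosSqIntegral]
  field_simp

lemma hasDerivAt_closedForm (hq : ∀ y, 0 < a + b * cos y ^ 2) (y : ℝ) :
    HasDerivAt (closedForm a b)
      ((cos y * weight a b y + sin y * (-(b * sin y * cos y) / weight a b y)) / a -
        b / a * (-sin y * cosSqIntegral a b y + cos y * (cos y ^ 2 / weight a b y))) y :=
  (((hasDerivAt_sin y).mul (hasDerivAt_weight hq y)).div_const a).sub
    (((hasDerivAt_cos y).mul (hasDerivAt_cosSqIntegral hq y)).const_mul _)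

lemma tendsto_deriv_closedForm (hq : ∀ y, 0 < a + b * cos y ^ 2) :
    Tendsto (deriv (closedForm a b)) (𝓝 (π / 2))
      (𝓝 (b / a * cosSqIntegral a b (π / 2))) := by
  have hp := fun y => (weight_pos hq y).ne'
  have hderiv := funext fun y => (hasDerivAt_closedForm hq y).deriv
  have hcont : Continuous (deriv (closedForm a b)) := by
    rw [hderiv]
    have := continuous_cosSqIntegral hq
    fun_prop (disch := exact hp _)
  convert hcont.tendsto (π / 2) using 2
  rw [hderiv]
  simp [cos_pi_div_two, sin_pi_div_two]

theorem tendsto_deriv_of_eqOn (hq : ∀ y, 0 < a + b * cos y ^ 2) {F : ℝ → ℝ}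
    (hF : EqOn F (fun y => cos y * ∫ ξ in (0 : ℝ)..y, 1 / (cos ξ ^ 2 * weight a b ξ))
      (Ioo (-(π / 2)) (π / 2))) :
    Tendsto (deriv F) (𝓝[<] (π / 2)) (𝓝 (b / a * cosSqIntegral a b (π / 2))) := by
  have hEq : EqOn F (closedForm a b) (Ioo (-(π / 2)) (π / 2)) := fun y hy =>
    (hF hy).trans (cos_mul_integral_eq_closedForm hq hy)
  have hderiv : deriv F =ᶠ[𝓝[<] (π / 2)] deriv (closedForm a b) :=
    eventually_of_mem (Ioo_mem_nhdsLT (by linarith [pi_pos])) fun y hy =>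
      (hEq.eventuallyEq_of_mem (isOpen_Ioo.mem_nhds hy)).deriv_eq
  exact ((tendsto_deriv_closedForm hq).mono_left nhdsWithin_le_nhds).congr' hderiv.symm

end CosWeight

end

open CosWeight in
/-- The derivative of `F(y) = cos y · ∫₀^y dξ/(cos²ξ √(k² + (m² − k²)cos²ξ))` tends to a
finite nonzero limit `Z` as `y → π/2` from the left. -/
theorem limit_of_F_deriv (m k : ℕ) (hm : 0 < m) (hk : 0 < k) (hmk : m ≠ k)
    (F : ℝ → ℝ)
    (hF : ∀ y : ℝ, F y = Real.cos y *
      ∫ ξ in (0 : ℝ)..y, 1 / (Real.cos ξ ^ 2 *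
        Real.sqrt ((k : ℝ) ^ 2 + ((m : ℝ) ^ 2 - (k : ℝ) ^ 2) * Real.cos ξ ^ 2))) :
    ∃ Z : ℝ, Z ≠ 0 ∧
      Tendsto (deriv F) (nhdsWithin (π / 2) (Set.Iio (π / 2))) (nhds Z) := by
  have hk2 : (0 : ℝ) < k ^ 2 := by positivity
  have hq := add_mul_cos_sq_pos hk2 (b := (m : ℝ) ^ 2 - (k : ℝ) ^ 2)
    (by simp only [add_sub_cancel]; positivity)
  have hb : (m : ℝ) ^ 2 - (k : ℝ) ^ 2 ≠ 0 :=
    sub_ne_zero.2 (by exact_mod_cast (Nat.pow_left_injective two_ne_zero).ne hmk)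
  exact ⟨_, mul_ne_zero (div_ne_zero hb hk2.ne') (cosSqIntegral_pi_div_two_pos hq).ne',
    tendsto_deriv_of_eqOn hq fun y _ => hF y⟩
end

section
/- Let m and k be positive integers with m ≠ k, let λ be a real number, and set a = (m² − k²)/(m² + k²), b = −(m² − k²)/(m² + k²), d = λ(m² − k²)/(m² + k²). If the polynomial Q*(μ) = a(2μ−1)² − b(2μ−1) − d vanishes at some integer μ₀, then λ = 2μ₀(2μ₀ − 1); consequently, if in addition 0 ≤ λ < 6 and λ ≠ 0, then λ = 2. -/
open Real

/- Since `b = -a` and `d = λa` with `a ≠ 0` (as `m ≠ k`), dividing `Q*(μ₀) = 0` by `a` leaves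
`λ = x² + x = x(x + 1)` for `x = 2μ₀ - 1`. The integers `2μ(2μ - 1)` are `0, 2, 6, 12, …`, so the
only nonzero value below `6` is `2`, attained at `μ = 1`. -/

lemma sq_sub_sq_div_sq_add_sq_ne_zero {m k : ℕ} (hmk : m ≠ k) :
    ((m : ℝ) ^ 2 - (k : ℝ) ^ 2) / ((m : ℝ) ^ 2 + (k : ℝ) ^ 2) ≠ 0 := by
  have hsq : (m : ℝ) ^ 2 ≠ (k : ℝ) ^ 2 := by
    rw [Ne, sq_eq_sq₀ (Nat.cast_nonneg m) (Nat.cast_nonneg k)]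
    exact_mod_cast hmk
  have hpos : (0 : ℝ) < (m : ℝ) ^ 2 + (k : ℝ) ^ 2 := by
    rcases Nat.eq_zero_or_pos m with rfl | hm
    · have hk : 0 < k := Nat.pos_of_ne_zero (Ne.symm hmk)
      positivity
    · positivity
  exact div_ne_zero (sub_ne_zero.mpr hsq) hpos.ne'

lemma eq_mul_add_one_of_quadratic_eq_zero {a lam x : ℝ} (ha : a ≠ 0)
    (h : a * x ^ 2 - (-a) * x - lam * a = 0) : lam = x * (x + 1) := by
  have hfac : a * (x * (x + 1) - lam) = 0 := by linear_combination h
  linarith [(mul_eq_zero.mp hfac).resolve_left ha]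

lemma Int.eq_one_of_two_mul_two_mul_sub_one_lt_six {μ : ℤ} (h6 : 2 * μ * (2 * μ - 1) < 6)
    (h0 : 2 * μ * (2 * μ - 1) ≠ 0) : μ = 1 := by
  have hlo : -1 < μ := by nlinarith
  have hhi : μ < 2 := by nlinarith
  interval_cases μ <;> simp_all

theorem MWI_coexistence_eigenvalue_general (m k : ℕ) (hmk : m ≠ k)
    (lam a b d : ℝ)
    (ha : a = ((m : ℝ) ^ 2 - (k : ℝ) ^ 2) / ((m : ℝ) ^ 2 + (k : ℝ) ^ 2))
    (hb : b = -(((m : ℝ) ^ 2 - (k : ℝ) ^ 2) / ((m : ℝ) ^ 2 + (k : ℝ) ^ 2)))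
    (hd : d = lam * (((m : ℝ) ^ 2 - (k : ℝ) ^ 2) / ((m : ℝ) ^ 2 + (k : ℝ) ^ 2)))
    (μ₀ : ℤ)
    (hQ : a * (2 * (μ₀ : ℝ) - 1) ^ 2 - b * (2 * (μ₀ : ℝ) - 1) - d = 0) :
    lam = 2 * (μ₀ : ℝ) * (2 * (μ₀ : ℝ) - 1) ∧
      (0 ≤ lam → lam < 6 → lam ≠ 0 → lam = 2) := by
  rw [← ha] at hb hd
  subst hb hd
  have hlam : lam = 2 * (μ₀ : ℝ) * (2 * (μ₀ : ℝ) - 1) := by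
    rw [eq_mul_add_one_of_quadratic_eq_zero (ha ▸ sq_sub_sq_div_sq_add_sq_ne_zero hmk) hQ]
    ring
  refine ⟨hlam, fun _ h6 h0 => ?_⟩
  have hμ₀ : μ₀ = 1 := by
    subst hlam
    exact Int.eq_one_of_two_mul_two_mul_sub_one_lt_six (by exact_mod_cast h6)
      (by exact_mod_cast h0)
  rw [hlam, hμ₀]
  norm_num

/-- If the polynomial `Q*(μ) = a(2μ−1)² − b(2μ−1) − d`, with coefficients
`a = (m² − k²)/(m² + k²)`, `b = −a`, `d = λa`, `m ≠ k`, vanishes at an integer `μ₀`, then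
`λ = 2μ₀(2μ₀ − 1)`; consequently if moreover `0 ≤ λ < 6` and `λ ≠ 0` then `λ = 2`. -/
theorem MWI_coexistence_eigenvalue (m k : ℕ) (hm : 0 < m) (hk : 0 < k) (hmk : m ≠ k)
    (lam a b d : ℝ)
    (ha : a = ((m : ℝ) ^ 2 - (k : ℝ) ^ 2) / ((m : ℝ) ^ 2 + (k : ℝ) ^ 2))
    (hb : b = -(((m : ℝ) ^ 2 - (k : ℝ) ^ 2) / ((m : ℝ) ^ 2 + (k : ℝ) ^ 2)))
    (hd : d = lam * (((m : ℝ) ^ 2 - (k : ℝ) ^ 2) / ((m : ℝ) ^ 2 + (k : ℝ) ^ 2)))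
    (μ₀ : ℤ)
    (hQ : a * (2 * (μ₀ : ℝ) - 1) ^ 2 - b * (2 * (μ₀ : ℝ) - 1) - d = 0) :
    lam = 2 * (μ₀ : ℝ) * (2 * (μ₀ : ℝ) - 1) ∧
      (0 ≤ lam → lam < 6 → lam ≠ 0 → lam = 2) :=
  MWI_coexistence_eigenvalue_general m k hmk lam a b d ha hb hd μ₀ hQ
end
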